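/- Let I, J ⊆ ℝ be open intervals and V ⊆ ℝ^ρ open, and let f : I × J × V → ℝ be smooth such that for each κ ∈ V the function f(·,·,κ) solves E and is Q-invariant on I × J. Then the determining equation D̂ₜη̌ = D̂ₓ^ρĤ holds at every point (t, x, f(t,x,κ), ∂ₓf(t,x,κ), …, ∂ₓ^{ρ−1}f(t,x,κ)) with (t,x,κ) ∈ I × J × V. If moreover the Jacobian determinant det(∂(f, ∂ₓf, …, ∂ₓ^{ρ−1}f)/∂(κ₁,…,κ_ρ)) is nonzero at some point of I × J × V, then the determining equation holds on a nonempty open subset of ℝ^{2+ρ}. -/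

import Mathlib

noncomputable section

/-- Partial derivative with respect to `t`. -/
def pT (ρ : ℕ) (g : ℝ × ℝ × (Fin ρ → ℝ) → ℝ) (p : ℝ × ℝ × (Fin ρ → ℝ)) : ℝ :=
  deriv (fun s => g (s, p.2)) p.1

/-- Partial derivative with respect to `x`. -/
def pX (ρ : ℕ) (g : ℝ × ℝ × (Fin ρ → ℝ) → ℝ) (p : ℝ × ℝ × (Fin ρ → ℝ)) : ℝ :=
  deriv (fun s => g (p.1, s, p.2.2)) p.2.1

/-- Partial derivative with respect to the coordinate `v^a`. -/
def pV (ρ : ℕ) (a : Fin ρ) (g : ℝ × ℝ × (Fin ρ → ℝ) → ℝ) (p : ℝ × ℝ × (Fin ρ → ℝ)) : ℝ :=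
  deriv (fun s => g (p.1, p.2.1, Function.update p.2.2 a s)) (p.2.2 a)

/-- The coefficient of `∂_{v^a}` in the vector field `D̂ₓ`:
`v^{a+1}` for `a < ρ - 1` and `η̌` for `a = ρ - 1`. -/
def dxCoeff (ρ : ℕ) (η : ℝ × ℝ × (Fin ρ → ℝ) → ℝ) (p : ℝ × ℝ × (Fin ρ → ℝ)) (a : Fin ρ) : ℝ :=
  if h : (a : ℕ) + 1 < ρ then p.2.2 ⟨(a : ℕ) + 1, h⟩ else η p

/-- The restricted total derivative `D̂ₓ` acting on functions of `(t, x, v⁰, …, v^{ρ-1})`. -/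
def DX (ρ : ℕ) (η g : ℝ × ℝ × (Fin ρ → ℝ) → ℝ) : ℝ × ℝ × (Fin ρ → ℝ) → ℝ :=
  fun p => pX ρ g p + ∑ a : Fin ρ, dxCoeff ρ η p a * pV ρ a g p

/-- `Ĥ(t,x,v⁰,…,v^{ρ-1})`: the right-hand side `H` with `u_i` replaced by `v^i` for `i < ρ`
and by `D̂ₓ^{i-ρ} η̌` for `i ≥ ρ`.  This covers both cases `ρ > r` and `ρ ≤ r`. -/
def Hhat (ρ r : ℕ) (H : ℝ × ℝ × (Fin (r + 1) → ℝ) → ℝ)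
    (η : ℝ × ℝ × (Fin ρ → ℝ) → ℝ) : ℝ × ℝ × (Fin ρ → ℝ) → ℝ :=
  fun p => H (p.1, p.2.1, fun i =>
    if h : (i : ℕ) < ρ then p.2.2 ⟨(i : ℕ), h⟩ else (DX ρ η)^[(i : ℕ) - ρ] η p)

/-- The restricted total derivative `D̂ₜ` acting on functions of `(t, x, v⁰, …, v^{ρ-1})`. -/
def DT (ρ r : ℕ) (H : ℝ × ℝ × (Fin (r + 1) → ℝ) → ℝ)
    (η g : ℝ × ℝ × (Fin ρ → ℝ) → ℝ) : ℝ × ℝ × (Fin ρ → ℝ) → ℝ :=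
  fun p => pT ρ g p + ∑ b : Fin ρ, (DX ρ η)^[(b : ℕ)] (Hhat ρ r H η) p * pV ρ b g p

/-- `u` solves the evolution equation `uₜ = H(t, x, u, ∂ₓu, …, ∂ₓ^r u)` on the set `s`. -/
def SolvesE (r : ℕ) (H : ℝ × ℝ × (Fin (r + 1) → ℝ) → ℝ) (u : ℝ → ℝ → ℝ)
    (s : Set (ℝ × ℝ)) : Prop :=
  ∀ q ∈ s, deriv (fun t => u t q.2) q.1
    = H (q.1, q.2, fun i => deriv^[(i : ℕ)] (u q.1) q.2)

/-- `u` is `Q`-invariant: `∂ₓ^ρ u = η̌(t, x, u, ∂ₓu, …, ∂ₓ^{ρ-1}u)` on the set `s`. -/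
def QInvariant (ρ : ℕ) (η : ℝ × ℝ × (Fin ρ → ℝ) → ℝ) (u : ℝ → ℝ → ℝ)
    (s : Set (ℝ × ℝ)) : Prop :=
  ∀ q ∈ s, deriv^[ρ] (u q.1) q.2 = η (q.1, q.2, fun a => deriv^[(a : ℕ)] (u q.1) q.2)


/-! ### Auxiliary development -/

open scoped ContDiff

section Aux

lemma one_le_i : (1 : WithTop ℕ∞) ≤ ∞ := by exact_mod_cast (le_top : (1:ℕ∞) ≤ ⊤)
lemma two_le_i : (2 : WithTop ℕ∞) ≤ ∞ := by
  have : ((2:ℕ∞) : WithTop ℕ∞) ≤ ((⊤:ℕ∞) : WithTop ℕ∞) := by exact_mod_cast (le_top : (2:ℕ∞) ≤ ⊤)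
  simpa using this
lemma iadd_one : (∞ + 1 : WithTop ℕ∞) ≤ ∞ := by
  exact_mod_cast (le_top : ((⊤:ℕ∞)+1:ℕ∞) ≤ ⊤)

section Slice
variable {E : Type*} [NormedAddCommGroup E] [NormedSpace ℝ E]

lemma hasDerivAt_line (c v : E) (x : ℝ) : HasDerivAt (fun s : ℝ => c + s • v) v x := by
  simpa using ((hasDerivAt_id x).smul_const v).const_add c

lemma hasDerivAt_slice (g : E → ℝ) (c v : E) (x : ℝ)
    (hg : DifferentiableAt ℝ g (c + x • v)) :
    HasDerivAt (fun s => g (c + s • v)) (fderiv ℝ g (c + x • v) v) x := by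
  have h1 : HasFDerivAt g (fderiv ℝ g (c + x • v)) ((fun s : ℝ => c + s • v) x) := by
    simpa using hg.hasFDerivAt
  simpa [Function.comp_def] using h1.comp_hasDerivAt x (hasDerivAt_line c v x)
end Slice

abbrev Wsp (ρ : ℕ) := ℝ × ℝ × (Fin ρ → ℝ)

def eT (ρ : ℕ) : Wsp ρ := (1, 0, 0)
def eX (ρ : ℕ) : Wsp ρ := (0, 1, 0)
def eV (ρ : ℕ) (a : Fin ρ) : Wsp ρ := (0, 0, Pi.single a 1)

variable {ρ : ℕ}

lemma hasDerivAt_slice_t (g : Wsp ρ → ℝ) (p : Wsp ρ) (hg : DifferentiableAt ℝ g p) :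
    HasDerivAt (fun s => g (s, p.2)) (fderiv ℝ g p (eT ρ)) p.1 := by
  have key : (fun s : ℝ => g ((s, p.2) : Wsp ρ)) = fun s : ℝ => g (((0:ℝ), p.2) + s • eT ρ) := by
    funext s; apply congrArg g; simp [eT, Prod.ext_iff]
  have hp : (((0:ℝ), p.2) : Wsp ρ) + p.1 • eT ρ = p := by simp [eT, Prod.ext_iff]
  have h := hasDerivAt_slice g ((0:ℝ), p.2) (eT ρ) p.1 (by rwa [hp])
  rw [hp] at h
  rw [key]; exact h

lemma hasDerivAt_slice_x (g : Wsp ρ → ℝ) (p : Wsp ρ) (hg : DifferentiableAt ℝ g p) :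
    HasDerivAt (fun s => g (p.1, s, p.2.2)) (fderiv ℝ g p (eX ρ)) p.2.1 := by
  have key : (fun s : ℝ => g ((p.1, s, p.2.2) : Wsp ρ))
      = fun s : ℝ => g ((p.1, (0:ℝ), p.2.2) + s • eX ρ) := by
    funext s; apply congrArg g; simp [eX, Prod.ext_iff]
  have hp : ((p.1, (0:ℝ), p.2.2) : Wsp ρ) + p.2.1 • eX ρ = p := by simp [eX, Prod.ext_iff]
  have h := hasDerivAt_slice g (p.1, (0:ℝ), p.2.2) (eX ρ) p.2.1 (by rwa [hp])
  rw [hp] at h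
  rw [key]; exact h

lemma update_line (κ : Fin ρ → ℝ) (a : Fin ρ) (s : ℝ) :
    Function.update κ a s = (κ - κ a • (Pi.single a 1 : Fin ρ → ℝ)) + s • (Pi.single a 1 : Fin ρ → ℝ) := by
  funext j
  by_cases h : j = a
  · subst h; simp
  · simp [Function.update_apply, h, Pi.single_apply, h]

lemma hasDerivAt_slice_v (g : Wsp ρ → ℝ) (p : Wsp ρ) (a : Fin ρ) (hg : DifferentiableAt ℝ g p) :
    HasDerivAt (fun s => g (p.1, p.2.1, Function.update p.2.2 a s)) (fderiv ℝ g p (eV ρ a))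
      (p.2.2 a) := by
  have key : (fun s : ℝ => g ((p.1, p.2.1, Function.update p.2.2 a s) : Wsp ρ))
      = fun s : ℝ => g ((p.1, p.2.1, p.2.2 - p.2.2 a • (Pi.single a 1 : Fin ρ → ℝ)) + s • eV ρ a) := by
    funext s; apply congrArg g
    simp [eV, Prod.ext_iff, update_line p.2.2 a s]
  have hp : ((p.1, p.2.1, p.2.2 - p.2.2 a • (Pi.single a 1 : Fin ρ → ℝ)) : Wsp ρ)
      + p.2.2 a • eV ρ a = p := by
    simp [eV, Prod.ext_iff]
  have h := hasDerivAt_slice g (p.1, p.2.1, p.2.2 - p.2.2 a • (Pi.single a 1 : Fin ρ → ℝ)) (eV ρ a)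
    (p.2.2 a) (by rwa [hp])
  rw [hp] at h
  rw [key]; exact h

/-! #### Smoothness of directional derivatives -/

lemma contDiff_fderiv_apply {g : Wsp ρ → ℝ} (hg : ContDiff ℝ ∞ g) (v : Wsp ρ) :
    ContDiff ℝ ∞ (fun p => fderiv ℝ g p v) :=
  (hg.fderiv_right iadd_one).clm_apply contDiff_const

lemma contDiffOn_fderiv_apply {g : Wsp ρ → ℝ} {s : Set (Wsp ρ)} (hg : ContDiffOn ℝ ∞ g s)
    (hs : IsOpen s) (v : Wsp ρ) : ContDiffOn ℝ ∞ (fun p => fderiv ℝ g p v) s :=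
  (hg.fderiv_of_isOpen hs iadd_one).clm_apply contDiffOn_const

lemma differentiableAt_of_contDiffOn {g : Wsp ρ → ℝ} {s : Set (Wsp ρ)}
    (hg : ContDiffOn ℝ ∞ g s) (hs : IsOpen s) {p : Wsp ρ} (hp : p ∈ s) :
    DifferentiableAt ℝ g p :=
  (hg.differentiableOn (by simp)).differentiableAt (hs.mem_nhds hp)

/-! #### The operator `Dp` (a clean version of `DX`) -/

def Dp (ρ : ℕ) (η g : Wsp ρ → ℝ) : Wsp ρ → ℝ :=
  fun p => fderiv ℝ g p (eX ρ) + ∑ a : Fin ρ, dxCoeff ρ η p a * fderiv ℝ g p (eV ρ a)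

lemma contDiff_dxCoeff {η : Wsp ρ → ℝ} (hη : ContDiff ℝ ∞ η) (a : Fin ρ) :
    ContDiff ℝ ∞ (fun p => dxCoeff ρ η p a) := by
  unfold dxCoeff
  by_cases h : (a:ℕ) + 1 < ρ
  · simp only [dif_pos h]
    exact contDiff_pi.mp (contDiff_snd.comp contDiff_snd) _
  · simp only [dif_neg h]; exact hη

lemma contDiff_Dp {η g : Wsp ρ → ℝ} (hη : ContDiff ℝ ∞ η) (hg : ContDiff ℝ ∞ g) :
    ContDiff ℝ ∞ (Dp ρ η g) :=
  (contDiff_fderiv_apply hg _).add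
    (ContDiff.sum fun a _ => (contDiff_dxCoeff hη a).mul (contDiff_fderiv_apply hg _))

lemma Dp_apply_eq (η : Wsp ρ → ℝ) (g : Wsp ρ → ℝ) (hg : Differentiable ℝ g) :
    DX ρ η g = Dp ρ η g := by
  funext p
  unfold DX Dp pX pV
  rw [(hasDerivAt_slice_x g p (hg p)).deriv]
  congr 1
  refine Finset.sum_congr rfl fun a _ => ?_
  rw [(hasDerivAt_slice_v g p a (hg p)).deriv]

lemma contDiff_Dp_iter {η g : Wsp ρ → ℝ} (hη : ContDiff ℝ ∞ η) (hg : ContDiff ℝ ∞ g) (n : ℕ) :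
    ContDiff ℝ ∞ ((Dp ρ η)^[n] g) := by
  induction n with
  | zero => exact hg
  | succ n IH => rw [Function.iterate_succ_apply']; exact contDiff_Dp hη IH

lemma DX_iter_eq {η g : Wsp ρ → ℝ} (hη : ContDiff ℝ ∞ η) (hg : ContDiff ℝ ∞ g) (n : ℕ) :
    (DX ρ η)^[n] g = (Dp ρ η)^[n] g := by
  induction n with
  | zero => rfl
  | succ n IH =>
    rw [Function.iterate_succ_apply', Function.iterate_succ_apply', IH,
      Dp_apply_eq η _ ((contDiff_Dp_iter hη hg n).differentiable (by simp))]

/-! #### The function `Hp` (a clean version of `Hhat`) -/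

def Hp (ρ r : ℕ) (H : ℝ × ℝ × (Fin (r + 1) → ℝ) → ℝ) (η : Wsp ρ → ℝ) : Wsp ρ → ℝ :=
  fun p => H (p.1, p.2.1, fun i =>
    if h : (i : ℕ) < ρ then p.2.2 ⟨(i : ℕ), h⟩ else (Dp ρ η)^[(i : ℕ) - ρ] η p)

lemma Hhat_eq {r : ℕ} {H : ℝ × ℝ × (Fin (r + 1) → ℝ) → ℝ} {η : Wsp ρ → ℝ}
    (hη : ContDiff ℝ ∞ η) : Hhat ρ r H η = Hp ρ r H η := by
  funext p
  unfold Hhat Hp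
  refine congrArg H (Prod.ext rfl (Prod.ext rfl ?_))
  funext i
  by_cases h : (i:ℕ) < ρ
  · simp [h]
  · simp only [dif_neg h]; rw [DX_iter_eq hη hη]

lemma contDiff_Hp {r : ℕ} {H : ℝ × ℝ × (Fin (r + 1) → ℝ) → ℝ} {η : Wsp ρ → ℝ}
    (hH : ContDiff ℝ ∞ H) (hη : ContDiff ℝ ∞ η) : ContDiff ℝ ∞ (Hp ρ r H η) := by
  apply hH.comp
  refine contDiff_fst.prodMk ((contDiff_fst.comp contDiff_snd).prodMk (contDiff_pi.mpr fun i => ?_))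
  by_cases h : (i:ℕ) < ρ
  · simp only [dif_pos h]
    exact contDiff_pi.mp (contDiff_snd.comp contDiff_snd) _
  · simp only [dif_neg h]; exact contDiff_Dp_iter hη hη _

/-! #### Vector decomposition -/

lemma single_decomp (w : Fin ρ → ℝ) : ∑ a : Fin ρ, w a • (Pi.single a 1 : Fin ρ → ℝ) = w := by
  funext j
  rw [Finset.sum_apply]
  simp [Pi.single_apply, Finset.sum_ite_eq]

lemma vec_decomp (u v : ℝ) (w : Fin ρ → ℝ) :
    ((u, v, w) : Wsp ρ) = u • eT ρ + v • eX ρ + ∑ a : Fin ρ, w a • eV ρ a := by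
  have Lr : (Fin ρ → ℝ) →ₗ[ℝ] Wsp ρ :=
    (LinearMap.inr ℝ ℝ (ℝ × (Fin ρ → ℝ))).comp (LinearMap.inr ℝ ℝ (Fin ρ → ℝ))
  set L : (Fin ρ → ℝ) →ₗ[ℝ] Wsp ρ :=
    (LinearMap.inr ℝ ℝ (ℝ × (Fin ρ → ℝ))).comp (LinearMap.inr ℝ ℝ (Fin ρ → ℝ)) with hL
  have h1 : ∀ z : Fin ρ → ℝ, L z = ((0 : ℝ), (0 : ℝ), z) := fun z => rfl
  have h2 : ∑ a : Fin ρ, w a • eV ρ a = ((0 : ℝ), (0 : ℝ), w) := by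
    have : ∀ a : Fin ρ, w a • eV ρ a = L (w a • (Pi.single a 1 : Fin ρ → ℝ)) := by
      intro a; rw [map_smul, h1]; rfl
    rw [Finset.sum_congr rfl fun a _ => this a, ← map_sum, single_decomp, h1]
  rw [h2]
  simp [eT, eX, Prod.ext_iff]

lemma clm_decomp (L : Wsp ρ →L[ℝ] ℝ) (u v : ℝ) (w : Fin ρ → ℝ) :
    L (u, v, w) = u * L (eT ρ) + v * L (eX ρ) + ∑ a : Fin ρ, w a * L (eV ρ a) := by
  rw [vec_decomp u v w]
  simp [smul_eq_mul]

/-! #### Iterated `x`-derivatives of the family -/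

def PXi (ρ : ℕ) (f : Wsp ρ → ℝ) : ℕ → Wsp ρ → ℝ
  | 0 => f
  | n+1 => fun p => fderiv ℝ (PXi ρ f n) p (eX ρ)

def Jm (ρ : ℕ) (f : Wsp ρ → ℝ) : Wsp ρ → Wsp ρ :=
  fun p => (p.1, p.2.1, fun a : Fin ρ => PXi ρ f (a : ℕ) p)

lemma contDiffOn_PXi {f : Wsp ρ → ℝ} {s : Set (Wsp ρ)} (hf : ContDiffOn ℝ ∞ f s)
    (hs : IsOpen s) (n : ℕ) : ContDiffOn ℝ ∞ (PXi ρ f n) s := by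
  induction n with
  | zero => exact hf
  | succ n IH => exact contDiffOn_fderiv_apply IH hs _

lemma derivIter {f : Wsp ρ → ℝ} {s : Set (Wsp ρ)} (hf : ContDiffOn ℝ ∞ f s) (hs : IsOpen s)
    (hsl : ∀ p ∈ s, ∀ᶠ y in nhds p.2.1, ((p.1, y, p.2.2) : Wsp ρ) ∈ s) :
    ∀ n, ∀ p ∈ s, deriv^[n] (fun y => f (p.1, y, p.2.2)) p.2.1 = PXi ρ f n p := by
  intro n
  induction n with
  | zero => intro p hp; rfl
  | succ n IH =>
    intro p hp
    rw [Function.iterate_succ_apply']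
    have h1 : deriv^[n] (fun y => f (p.1, y, p.2.2))
        =ᶠ[nhds p.2.1] fun y => PXi ρ f n (p.1, y, p.2.2) := by
      filter_upwards [hsl p hp] with y hy
      exact IH (p.1, y, p.2.2) hy
    rw [h1.deriv_eq]
    exact (hasDerivAt_slice_x (PXi ρ f n) p
      (differentiableAt_of_contDiffOn (contDiffOn_PXi hf hs n) hs hp)).deriv

/-! #### Chain rules along the jet map -/

lemma chain_x {η f : Wsp ρ → ℝ} {s : Set (Wsp ρ)} (hf : ContDiffOn ℝ ∞ f s) (hs : IsOpen s)
    (hQ : ∀ p ∈ s, PXi ρ f ρ p = η (Jm ρ f p))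
    {g : Wsp ρ → ℝ} (hg : Differentiable ℝ g) {p : Wsp ρ} (hp : p ∈ s) :
    HasDerivAt (fun y => g (Jm ρ f (p.1, y, p.2.2))) (Dp ρ η g (Jm ρ f p)) p.2.1 := by
  have hJ : HasDerivAt (fun y => Jm ρ f (p.1, y, p.2.2))
      (((0:ℝ), (1:ℝ), fun a : Fin ρ => PXi ρ f ((a:ℕ)+1) p) : Wsp ρ) p.2.1 := by
    refine HasDerivAt.prodMk (hasDerivAt_const _ _) (HasDerivAt.prodMk (hasDerivAt_id _) ?_)
    refine hasDerivAt_pi.mpr fun a => ?_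
    exact hasDerivAt_slice_x (PXi ρ f (a:ℕ)) p
      (differentiableAt_of_contDiffOn (contDiffOn_PXi hf hs (a:ℕ)) hs hp)
  have hcomp := (hg (Jm ρ f p)).hasFDerivAt.comp_hasDerivAt p.2.1 hJ
  have hval : fderiv ℝ g (Jm ρ f p) (((0:ℝ), (1:ℝ), fun a : Fin ρ => PXi ρ f ((a:ℕ)+1) p) : Wsp ρ)
      = Dp ρ η g (Jm ρ f p) := by
    rw [clm_decomp]
    unfold Dp
    simp only [zero_mul, one_mul, zero_add]
    congr 1
    refine Finset.sum_congr rfl fun a _ => ?_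
    congr 1
    unfold dxCoeff
    by_cases h : (a:ℕ) + 1 < ρ
    · simp only [dif_pos h]; rfl
    · simp only [dif_neg h]
      have ha : (a:ℕ) + 1 = ρ := le_antisymm a.isLt (not_lt.mp h)
      rw [show PXi ρ f ((a:ℕ)+1) p = PXi ρ f ρ p from by rw [ha], hQ p hp]
  rw [← hval]
  exact hcomp

lemma step_x {η f : Wsp ρ → ℝ} {s : Set (Wsp ρ)} (hf : ContDiffOn ℝ ∞ f s) (hs : IsOpen s)
    (hsl : ∀ p ∈ s, ∀ᶠ y in nhds p.2.1, ((p.1, y, p.2.2) : Wsp ρ) ∈ s)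
    (hQ : ∀ p ∈ s, PXi ρ f ρ p = η (Jm ρ f p))
    {g : Wsp ρ → ℝ} (hg : ContDiff ℝ ∞ g) {h : Wsp ρ → ℝ}
    (hh : ContDiffOn ℝ ∞ h s) (heq : ∀ p ∈ s, h p = g (Jm ρ f p)) :
    ∀ p ∈ s, fderiv ℝ h p (eX ρ) = Dp ρ η g (Jm ρ f p) := by
  intro p hp
  have h1 : HasDerivAt (fun y => h (p.1, y, p.2.2)) (fderiv ℝ h p (eX ρ)) p.2.1 :=
    hasDerivAt_slice_x h p (differentiableAt_of_contDiffOn hh hs hp)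
  have h2 : deriv (fun y => h (p.1, y, p.2.2)) p.2.1
      = deriv (fun y => g (Jm ρ f (p.1, y, p.2.2))) p.2.1 := by
    apply Filter.EventuallyEq.deriv_eq
    filter_upwards [hsl p hp] with y hy
    exact heq _ hy
  rw [← h1.deriv, h2, (chain_x hf hs hQ (hg.differentiable (by simp)) hp).deriv]

lemma qiter {η f : Wsp ρ → ℝ} {s : Set (Wsp ρ)} (hη : ContDiff ℝ ∞ η)
    (hf : ContDiffOn ℝ ∞ f s) (hs : IsOpen s)
    (hsl : ∀ p ∈ s, ∀ᶠ y in nhds p.2.1, ((p.1, y, p.2.2) : Wsp ρ) ∈ s)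
    (hQ : ∀ p ∈ s, PXi ρ f ρ p = η (Jm ρ f p)) :
    ∀ n, ∀ p ∈ s, PXi ρ f (ρ + n) p = (Dp ρ η)^[n] η (Jm ρ f p) := by
  intro n
  induction n with
  | zero => exact hQ
  | succ n IH =>
    intro p hp
    have := step_x hf hs hsl hQ (contDiff_Dp_iter hη hη n)
      (contDiffOn_PXi hf hs (ρ + n)) IH p hp
    rw [Function.iterate_succ_apply']
    exact this

lemma bstep {η f : Wsp ρ → ℝ} {s : Set (Wsp ρ)} (hη : ContDiff ℝ ∞ η)
    (hf : ContDiffOn ℝ ∞ f s) (hs : IsOpen s)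
    (hsl : ∀ p ∈ s, ∀ᶠ y in nhds p.2.1, ((p.1, y, p.2.2) : Wsp ρ) ∈ s)
    (hQ : ∀ p ∈ s, PXi ρ f ρ p = η (Jm ρ f p))
    {G : Wsp ρ → ℝ} (hG : ContDiff ℝ ∞ G) {u : Wsp ρ → ℝ} (hu : ContDiffOn ℝ ∞ u s)
    (hbase : ∀ p ∈ s, u p = G (Jm ρ f p)) :
    ∀ b, ∀ p ∈ s, PXi ρ u b p = (Dp ρ η)^[b] G (Jm ρ f p) := by
  intro b
  induction b with
  | zero => exact hbase
  | succ b IH =>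
    intro p hp
    have := step_x hf hs hsl hQ (contDiff_Dp_iter hη hG b)
      (contDiffOn_PXi hu hs b) IH p hp
    rw [Function.iterate_succ_apply']
    exact this

/-! #### Symmetry of second derivatives -/

lemma fderiv_fderiv_apply {u : Wsp ρ → ℝ} {s : Set (Wsp ρ)} (hu : ContDiffOn ℝ ∞ u s)
    (hs : IsOpen s) {p : Wsp ρ} (hp : p ∈ s) (v w : Wsp ρ) :
    fderiv ℝ (fun q => fderiv ℝ u q v) p w = fderiv ℝ (fun q => fderiv ℝ u q w) p v := by
  have hdd : DifferentiableAt ℝ (fderiv ℝ u) p :=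
    ((hu.fderiv_of_isOpen hs iadd_one).differentiableOn (by simp)).differentiableAt
      (hs.mem_nhds hp)
  have hsym : IsSymmSndFDerivAt ℝ u p :=
    ((hu.contDiffAt (hs.mem_nhds hp)).of_le two_le_i).isSymmSndFDerivAt (by simp)
  rw [fderiv_clm_apply hdd (differentiableAt_const v),
    fderiv_clm_apply hdd (differentiableAt_const w)]
  simp only [fderiv_const, fderiv_fun_const, Pi.zero_apply, ContinuousLinearMap.comp_zero, zero_add,
    ContinuousLinearMap.add_apply, ContinuousLinearMap.flip_apply,
    ContinuousLinearMap.zero_apply]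
  exact hsym.eq w v

lemma comm_tx {f : Wsp ρ → ℝ} {s : Set (Wsp ρ)} (hf : ContDiffOn ℝ ∞ f s) (hs : IsOpen s) :
    ∀ b, ∀ p ∈ s, fderiv ℝ (PXi ρ f b) p (eT ρ)
      = PXi ρ (fun q => fderiv ℝ f q (eT ρ)) b p := by
  intro b
  induction b with
  | zero => intro p hp; rfl
  | succ b IH =>
    intro p hp
    have e1 : fderiv ℝ (PXi ρ f (b+1)) p (eT ρ)
        = fderiv ℝ (fun q => fderiv ℝ (PXi ρ f b) q (eX ρ)) p (eT ρ) := rfl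
    rw [e1, fderiv_fderiv_apply (contDiffOn_PXi hf hs b) hs hp]
    have e2 : (fun q => fderiv ℝ (PXi ρ f b) q (eT ρ))
        =ᶠ[nhds p] PXi ρ (fun q => fderiv ℝ f q (eT ρ)) b := by
      filter_upwards [hs.mem_nhds hp] with q hq using IH q hq
    rw [Filter.EventuallyEq.fderiv_eq e2]
    rfl

lemma chain_t {f : Wsp ρ → ℝ} {s : Set (Wsp ρ)} (hf : ContDiffOn ℝ ∞ f s) (hs : IsOpen s)
    {g : Wsp ρ → ℝ} (hg : Differentiable ℝ g) {p : Wsp ρ} (hp : p ∈ s) :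
    HasDerivAt (fun τ => g (Jm ρ f (τ, p.2)))
      (fderiv ℝ g (Jm ρ f p) (eT ρ)
        + ∑ a : Fin ρ, fderiv ℝ (PXi ρ f (a:ℕ)) p (eT ρ) * fderiv ℝ g (Jm ρ f p) (eV ρ a))
      p.1 := by
  have hJ : HasDerivAt (fun τ => Jm ρ f (τ, p.2))
      (((1:ℝ), (0:ℝ), fun a : Fin ρ => fderiv ℝ (PXi ρ f (a:ℕ)) p (eT ρ)) : Wsp ρ) p.1 := by
    show HasDerivAt
      (fun τ : ℝ => (((τ:ℝ), p.2.1, fun a : Fin ρ => PXi ρ f (a:ℕ) (τ, p.2)) : Wsp ρ)) _ _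
    refine HasDerivAt.prodMk (hasDerivAt_id _) (HasDerivAt.prodMk (hasDerivAt_const _ _) ?_)
    refine hasDerivAt_pi.mpr fun a => ?_
    exact hasDerivAt_slice_t (PXi ρ f (a:ℕ)) p
      (differentiableAt_of_contDiffOn (contDiffOn_PXi hf hs (a:ℕ)) hs hp)
  have hcomp := (hg (Jm ρ f p)).hasFDerivAt.comp_hasDerivAt p.1 hJ
  have hval : fderiv ℝ g (Jm ρ f p)
      (((1:ℝ), (0:ℝ), fun a : Fin ρ => fderiv ℝ (PXi ρ f (a:ℕ)) p (eT ρ)) : Wsp ρ)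
      = fderiv ℝ g (Jm ρ f p) (eT ρ)
        + ∑ a : Fin ρ, fderiv ℝ (PXi ρ f (a:ℕ)) p (eT ρ) * fderiv ℝ g (Jm ρ f p) (eV ρ a) := by
    rw [clm_decomp]
    simp
  rw [← hval]
  exact hcomp

end Aux

/-- if `f` is a smooth family on `I × J × V` each of whose members solves the
evolution equation and is `Q`-invariant, then the determining equation `D̂ₜη̌ = D̂ₓ^ρĤ` holds
at every jet point `(t, x, f, ∂ₓf, …, ∂ₓ^{ρ-1}f)`; if moreover the Jacobian determinant
`det(∂(f,…,∂ₓ^{ρ-1}f)/∂κ)` is nonzero at some point, the determining equation holds on a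
nonempty open subset of `ℝ^{2+ρ}`. -/
theorem determining_on_jets_of_family
    (ρ r : ℕ) (hρ : 1 ≤ ρ) (hr : 1 ≤ r)
    (H : ℝ × ℝ × (Fin (r + 1) → ℝ) → ℝ) (hH : ContDiff ℝ (⊤ : ℕ∞) H)
    (η : ℝ × ℝ × (Fin ρ → ℝ) → ℝ) (hη : ContDiff ℝ (⊤ : ℕ∞) η)
    (I J : Set ℝ) (V : Set (Fin ρ → ℝ))
    (hI : IsOpen I) (hIc : I.OrdConnected) (hJ : IsOpen J) (hJc : J.OrdConnected)
    (hV : IsOpen V)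
    (f : ℝ × ℝ × (Fin ρ → ℝ) → ℝ) (hf : ContDiffOn ℝ (⊤ : ℕ∞) f (I ×ˢ J ×ˢ V))
    (hsol : ∀ κ ∈ V, SolvesE r H (fun t x => f (t, x, κ)) (I ×ˢ J) ∧
      QInvariant ρ η (fun t x => f (t, x, κ)) (I ×ˢ J)) :
    (∀ t ∈ I, ∀ x ∈ J, ∀ κ ∈ V,
      DT ρ r H η η (t, x, fun a => deriv^[(a : ℕ)] (fun y => f (t, y, κ)) x)
        = (DX ρ η)^[ρ] (Hhat ρ r H η)
            (t, x, fun a => deriv^[(a : ℕ)] (fun y => f (t, y, κ)) x)) ∧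
    ((∃ t ∈ I, ∃ x ∈ J, ∃ κ ∈ V,
        (Matrix.of fun a b : Fin ρ =>
          deriv (fun s => deriv^[(a : ℕ)] (fun y => f (t, y, Function.update κ b s)) x)
            (κ b)).det ≠ 0) →
      ∃ U : Set (ℝ × ℝ × (Fin ρ → ℝ)), IsOpen U ∧ U.Nonempty ∧
        ∀ p ∈ U, DT ρ r H η η p = (DX ρ η)^[ρ] (Hhat ρ r H η) p) := by
  classical
  set s : Set (Wsp ρ) := I ×ˢ J ×ˢ V with hsdef
  have hs : IsOpen s := hI.prod (hJ.prod hV)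
  have hfi : ContDiffOn ℝ ∞ f s := hf.of_le (by simp)
  have hηi : ContDiff ℝ ∞ η := hη.of_le (by simp)
  have hHi : ContDiff ℝ ∞ H := hH.of_le (by simp)
  have hsl : ∀ p ∈ s, ∀ᶠ y in nhds p.2.1, ((p.1, y, p.2.2) : Wsp ρ) ∈ s := by
    intro p hp
    filter_upwards [hJ.mem_nhds hp.2.1] with y hy
    exact ⟨hp.1, hy, hp.2.2⟩
  have hslt : ∀ p ∈ s, ∀ᶠ τ in nhds p.1, ((τ, p.2) : Wsp ρ) ∈ s := by
    intro p hp
    filter_upwards [hI.mem_nhds hp.1] with τ hτ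
    exact ⟨hτ, hp.2.1, hp.2.2⟩
  have hDI := derivIter hfi hs hsl
  have hjet : ∀ p ∈ s, ((p.1, p.2.1,
      fun a : Fin ρ => deriv^[(a:ℕ)] (fun y => f (p.1, y, p.2.2)) p.2.1) : Wsp ρ)
      = Jm ρ f p := by
    intro p hp
    exact Prod.ext rfl (Prod.ext rfl (funext fun a => hDI (a:ℕ) p hp))
  have hQ : ∀ p ∈ s, PXi ρ f ρ p = η (Jm ρ f p) := by
    intro p hp
    have h0 := (hsol p.2.2 hp.2.2).2 (p.1, p.2.1) ⟨hp.1, hp.2.1⟩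
    calc PXi ρ f ρ p = deriv^[ρ] (fun y => f (p.1, y, p.2.2)) p.2.1 := (hDI ρ p hp).symm
      _ = η (p.1, p.2.1, fun a : Fin ρ => deriv^[(a:ℕ)] (fun y => f (p.1, y, p.2.2)) p.2.1) := h0
      _ = η (Jm ρ f p) := by rw [hjet p hp]
  have hEv : ∀ p ∈ s, fderiv ℝ f p (eT ρ) = Hp ρ r H η (Jm ρ f p) := by
    intro p hp
    have h0 := (hsol p.2.2 hp.2.2).1 (p.1, p.2.1) ⟨hp.1, hp.2.1⟩
    have h1 : HasDerivAt (fun τ => f (τ, p.2)) (fderiv ℝ f p (eT ρ)) p.1 :=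
      hasDerivAt_slice_t f p (differentiableAt_of_contDiffOn hfi hs hp)
    calc fderiv ℝ f p (eT ρ) = deriv (fun τ => f (τ, p.2)) p.1 := h1.deriv.symm
      _ = H (p.1, p.2.1, fun i => deriv^[(i:ℕ)] (fun y => f (p.1, y, p.2.2)) p.2.1) := h0
      _ = Hp ρ r H η (Jm ρ f p) := by
          unfold Hp
          refine congrArg H (Prod.ext rfl (Prod.ext rfl ?_))
          funext i
          by_cases hi : (i:ℕ) < ρ
          · simp only [dif_pos hi]
            exact hDI (i:ℕ) p hp
          · simp only [dif_neg hi]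
            have hρi : ρ + ((i:ℕ) - ρ) = (i:ℕ) := Nat.add_sub_cancel' (not_lt.mp hi)
            calc deriv^[(i:ℕ)] (fun y => f (p.1, y, p.2.2)) p.2.1
                = PXi ρ f (i:ℕ) p := hDI _ p hp
              _ = PXi ρ f (ρ + ((i:ℕ) - ρ)) p := by rw [hρi]
              _ = (Dp ρ η)^[(i:ℕ) - ρ] η (Jm ρ f p) := qiter hηi hfi hs hsl hQ _ p hp
  have hB := bstep hηi hfi hs hsl hQ (contDiff_Hp hHi hηi)
    (contDiffOn_fderiv_apply hfi hs (eT ρ)) hEv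
  have hcomm := comm_tx hfi hs
  have main : ∀ p ∈ s, DT ρ r H η η (Jm ρ f p) = (DX ρ η)^[ρ] (Hhat ρ r H η) (Jm ρ f p) := by
    intro p hp
    set Jp := Jm ρ f p with hJp
    have hHrw : (DX ρ η)^[ρ] (Hhat ρ r H η) = (Dp ρ η)^[ρ] (Hp ρ r H η) := by
      rw [Hhat_eq hηi, DX_iter_eq hηi (contDiff_Hp hHi hηi)]
    have hRHS : (Dp ρ η)^[ρ] (Hp ρ r H η) Jp = fderiv ℝ (PXi ρ f ρ) p (eT ρ) := by
      rw [← hB ρ p hp, ← hcomm ρ p hp]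
    have hηd : Differentiable ℝ η := hηi.differentiable (by simp)
    have hLHS1 : DT ρ r H η η Jp
        = fderiv ℝ η Jp (eT ρ)
          + ∑ b : Fin ρ, (Dp ρ η)^[(b:ℕ)] (Hp ρ r H η) Jp * fderiv ℝ η Jp (eV ρ b) := by
      unfold DT pT pV
      rw [(hasDerivAt_slice_t η Jp (hηd Jp)).deriv]
      congr 1
      refine Finset.sum_congr rfl fun b _ => ?_
      rw [Hhat_eq hηi, DX_iter_eq hηi (contDiff_Hp hHi hηi),
        (hasDerivAt_slice_v η Jp b (hηd Jp)).deriv]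
    have hct := chain_t hfi hs hηd hp
    have hcoef : ∀ a : Fin ρ, fderiv ℝ (PXi ρ f (a:ℕ)) p (eT ρ)
        = (Dp ρ η)^[(a:ℕ)] (Hp ρ r H η) Jp := fun a => by
      rw [hcomm (a:ℕ) p hp, hB (a:ℕ) p hp]
    have hev : (fun τ => η (Jm ρ f (τ, p.2))) =ᶠ[nhds p.1] fun τ => PXi ρ f ρ (τ, p.2) := by
      filter_upwards [hslt p hp] with τ hτ
      exact (hQ (τ, p.2) hτ).symm
    have e3 : deriv (fun τ => η (Jm ρ f (τ, p.2))) p.1 = fderiv ℝ (PXi ρ f ρ) p (eT ρ) := by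
      rw [hev.deriv_eq]
      exact (hasDerivAt_slice_t (PXi ρ f ρ) p
        (differentiableAt_of_contDiffOn (contDiffOn_PXi hfi hs ρ) hs hp)).deriv
    have e4 : deriv (fun τ => η (Jm ρ f (τ, p.2))) p.1
        = fderiv ℝ η Jp (eT ρ)
          + ∑ a : Fin ρ, (Dp ρ η)^[(a:ℕ)] (Hp ρ r H η) Jp * fderiv ℝ η Jp (eV ρ a) := by
      rw [hct.deriv]
      congr 1
      exact Finset.sum_congr rfl fun a _ => by rw [hcoef a]
    rw [hLHS1, hHrw, hRHS, ← e3, e4]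
  constructor
  · intro t ht x hx κ hκ
    have hp : ((t, x, κ) : Wsp ρ) ∈ s := ⟨ht, hx, hκ⟩
    have hj' : ((t, x, fun a : Fin ρ => deriv^[(a:ℕ)] (fun y => f (t, y, κ)) x) : Wsp ρ)
        = Jm ρ f (t, x, κ) := hjet (t, x, κ) hp
    rw [hj']
    exact main (t, x, κ) hp
  · rintro ⟨t, ht, x, hx, κ, hκ, hdet⟩
    set p₀ : Wsp ρ := (t, x, κ) with hp₀def
    have hp₀ : p₀ ∈ s := ⟨ht, hx, hκ⟩
    have hM : ∀ a b : Fin ρ,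
        deriv (fun z => deriv^[(a:ℕ)] (fun y => f (t, y, Function.update κ b z)) x) (κ b)
          = fderiv ℝ (PXi ρ f (a:ℕ)) p₀ (eV ρ b) := by
      intro a b
      have hcont : Continuous (fun z : ℝ => Function.update κ b z) := by
        rw [show (fun z : ℝ => Function.update κ b z)
            = fun z => (κ - κ b • (Pi.single b 1 : Fin ρ → ℝ))
              + z • (Pi.single b 1 : Fin ρ → ℝ) from funext fun z => update_line κ b z]
        exact continuous_const.add (continuous_id.smul continuous_const)
      have hV' : ∀ᶠ z in nhds (κ b), Function.update κ b z ∈ V := by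
        refine hcont.continuousAt.eventually_mem (hV.mem_nhds ?_)
        rw [Function.update_eq_self]
        exact hκ
      have hev : (fun z => deriv^[(a:ℕ)] (fun y => f (t, y, Function.update κ b z)) x)
          =ᶠ[nhds (κ b)] fun z => PXi ρ f (a:ℕ) (t, x, Function.update κ b z) := by
        filter_upwards [hV'] with z hz
        exact hDI (a:ℕ) (t, x, Function.update κ b z) ⟨ht, hx, hz⟩
      rw [hev.deriv_eq]
      exact (hasDerivAt_slice_v (PXi ρ f (a:ℕ)) p₀ b
        (differentiableAt_of_contDiffOn (contDiffOn_PXi hfi hs (a:ℕ)) hs hp₀)).deriv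
    set M : Matrix (Fin ρ) (Fin ρ) ℝ := Matrix.of fun a b : Fin ρ =>
      deriv (fun z => deriv^[(a:ℕ)] (fun y => f (t, y, Function.update κ b z)) x) (κ b)
      with hMdef
    set L : Wsp ρ →L[ℝ] Wsp ρ :=
      (ContinuousLinearMap.fst ℝ ℝ (ℝ × (Fin ρ → ℝ))).prod
        (((ContinuousLinearMap.fst ℝ ℝ (Fin ρ → ℝ)).comp
            (ContinuousLinearMap.snd ℝ ℝ (ℝ × (Fin ρ → ℝ)))).prod
          (ContinuousLinearMap.pi fun a : Fin ρ => fderiv ℝ (PXi ρ f (a:ℕ)) p₀)) with hLdef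
    have hΦ : ContDiffOn ℝ ∞ (Jm ρ f) s := by
      refine ContDiffOn.prodMk contDiff_fst.contDiffOn
        (ContDiffOn.prodMk (contDiff_fst.comp contDiff_snd).contDiffOn ?_)
      exact contDiffOn_pi.mpr fun a => contDiffOn_PXi hfi hs (a:ℕ)
    have hfd : HasFDerivAt (Jm ρ f) L p₀ := by
      refine HasFDerivAt.prodMk hasFDerivAt_fst (HasFDerivAt.prodMk ?_ ?_)
      · exact hasFDerivAt_fst.comp p₀ hasFDerivAt_snd
      · exact hasFDerivAt_pi.mpr fun a =>
          (differentiableAt_of_contDiffOn (contDiffOn_PXi hfi hs (a:ℕ)) hs hp₀).hasFDerivAt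
    have hstrict : HasStrictFDerivAt (Jm ρ f) L p₀ := by
      have h1 := (hΦ.contDiffAt (hs.mem_nhds hp₀)).hasStrictFDerivAt (by simp)
      rwa [hfd.fderiv] at h1
    have hker : ∀ v : Wsp ρ, L v = 0 → v = 0 := by
      intro v hv
      have h1 : v.1 = 0 := congrArg Prod.fst hv
      have h2 : v.2.1 = 0 := congrArg (fun q : Wsp ρ => q.2.1) hv
      have h3 : ∀ a : Fin ρ, fderiv ℝ (PXi ρ f (a:ℕ)) p₀ v = 0 :=
        fun a => congrArg (fun q : Wsp ρ => q.2.2 a) hv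
      have h4 : M.mulVec v.2.2 = 0 := by
        funext a
        have h5 := h3 a
        have h6 : fderiv ℝ (PXi ρ f (a:ℕ)) p₀ v
            = v.1 * fderiv ℝ (PXi ρ f (a:ℕ)) p₀ (eT ρ)
              + v.2.1 * fderiv ℝ (PXi ρ f (a:ℕ)) p₀ (eX ρ)
              + ∑ b : Fin ρ, v.2.2 b * fderiv ℝ (PXi ρ f (a:ℕ)) p₀ (eV ρ b) :=
          clm_decomp (fderiv ℝ (PXi ρ f (a:ℕ)) p₀) v.1 v.2.1 v.2.2
        rw [h6, h1, h2] at h5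
        simp only [zero_mul, zero_add] at h5
        show (M.mulVec v.2.2) a = (0 : Fin ρ → ℝ) a
        calc (M.mulVec v.2.2) a = ∑ b : Fin ρ, M a b * v.2.2 b := by
              simp [Matrix.mulVec, dotProduct]
          _ = ∑ b : Fin ρ, v.2.2 b * fderiv ℝ (PXi ρ f (a:ℕ)) p₀ (eV ρ b) := by
              refine Finset.sum_congr rfl fun b _ => ?_
              rw [show M a b = fderiv ℝ (PXi ρ f (a:ℕ)) p₀ (eV ρ b) from hM a b]
              ring
          _ = 0 := h5
          _ = (0 : Fin ρ → ℝ) a := rfl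
      have hw : v.2.2 = 0 := by
        have hU : IsUnit M.det := isUnit_iff_ne_zero.mpr hdet
        have h7 : M⁻¹.mulVec (M.mulVec v.2.2) = 0 := by rw [h4, Matrix.mulVec_zero]
        rwa [Matrix.mulVec_mulVec, Matrix.nonsing_inv_mul M hU, Matrix.one_mulVec] at h7
      exact Prod.ext h1 (Prod.ext h2 hw)
    have hinjL : Function.Injective (L : Wsp ρ →ₗ[ℝ] Wsp ρ) :=
      LinearMap.ker_eq_bot.mp (LinearMap.ker_eq_bot'.mpr fun m hm => hker m hm)
    have hsurj : Function.Surjective (L : Wsp ρ →ₗ[ℝ] Wsp ρ) :=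
      LinearMap.injective_iff_surjective.mp hinjL
    let e : Wsp ρ ≃L[ℝ] Wsp ρ :=
      (LinearEquiv.ofBijective (L : Wsp ρ →ₗ[ℝ] Wsp ρ)
        ⟨hinjL, hsurj⟩).toContinuousLinearEquiv
    have hcoe : (e : Wsp ρ →L[ℝ] Wsp ρ) = L := by
      apply ContinuousLinearMap.ext
      intro v
      rfl
    have hstrict' : HasStrictFDerivAt (Jm ρ f) (e : Wsp ρ →L[ℝ] Wsp ρ) p₀ := by
      rwa [hcoe]
    have hnh : Filter.map (Jm ρ f) (nhds p₀) = nhds (Jm ρ f p₀) :=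
      hstrict'.map_nhds_eq_of_equiv
    refine ⟨interior (Jm ρ f '' s), isOpen_interior, ⟨Jm ρ f p₀, ?_⟩, ?_⟩
    · rw [mem_interior_iff_mem_nhds, ← hnh]
      exact Filter.image_mem_map (hs.mem_nhds hp₀)
    · intro q hq
      obtain ⟨p, hp, rfl⟩ := interior_subset hq
      exact main p hp
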